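/- arXiv:1310.1048 — 11 statements merged into one kernel-verified Lean document; each statement's English description precedes it below -/
import Mathlib

section
/- For all n ≥ 0, p_{n+1}(x) = x·p_n(x) − Σ_{i=0}^{n} p_i(x). -/
open Real Finset

noncomputable def p : ℕ → ℝ → ℝ
  | 0, x => x
  | 1, x => x * (x - 1)
  | (n+2), x => x * (p (n+1) x - p n x)

/-! By the recurrence, `x * p n x - p (n + 1) x` increases by exactly `p (n + 1) x` from `n` to
`n + 1`, and at `n = 0` it equals `x = p 0 x`; so it is the partial sum of the `p i x`. -/

theorem sum_range_succ_p (n : ℕ) (x : ℝ) :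
    ∑ i ∈ range (n + 1), p i x = x * p n x - p (n + 1) x := by
  induction n with
  | zero => simp only [zero_add, sum_range_one, p]; ring
  | succ k ih =>
    rw [sum_range_succ, ih, p]
    ring

theorem stmt_0 (n : ℕ) (x : ℝ) :
    p (n+1) x = x * p n x - ∑ i ∈ Finset.range (n+1), p i x := by
  rw [sum_range_succ_p]
  ring
end

section
/- For all n ≥ 0, p_n(x) = x^⌊(n+1)/2⌋ · Π_{k=1}^{⌊(n+2)/2⌋} (x − 4cos²(kπ/(n+2))). -/
/-!
With `x = 4 cos² θ`, induction on the three-term recurrence gives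
`p n x · sin θ = (2 cos θ)^(n+1) · sin((n+2)θ)`, so `4 cos²(kπ/(n+2))` is a root of `p n` for
`0 < k < n+2`. The polynomial `p n` is monic of degree `n+1` and divisible by `X^⌊(n+2)/2⌋`;
the cofactor is monic of degree `⌊(n+1)/2⌋` and vanishes at the distinct nonzero nodes
`k = 1, …, ⌊(n+1)/2⌋`, so it is their product. For even `n` the node `k = (n+2)/2` is `0`,
which accounts for the different split of the exponent and the range in the statement.
-/

open Real Finset

open Polynomial

noncomputable def pPoly : ℕ → ℝ[X]
  | 0 => X
  | 1 => X * (X - 1)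
  | (n+2) => X * (pPoly (n+1) - pPoly n)

lemma eval_pPoly (n : ℕ) (x : ℝ) : (pPoly n).eval x = p n x := by
  induction n using Nat.twoStepInduction with
  | zero => simp [pPoly, p]
  | one => simp [pPoly, p]
  | more n ih₀ ih₁ => simp [pPoly, p, ih₀, ih₁]

lemma Polynomial.IsMonicOfDegree.eq_nodal {R ι : Type*} [CommRing R] [IsDomain R] {f : R[X]}
    {s : Finset ι} {v : ι → R} (hf : IsMonicOfDegree f s.card) (hv : Set.InjOn v s)
    (hroot : ∀ i ∈ s, f.eval (v i) = 0) : f = Lagrange.nodal s v := by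
  refine eq_of_degree_le_of_eval_index_eq _ hv ?_ ?_ ?_ ?_
  · rw [degree_eq_natDegree hf.ne_zero, hf.natDegree_eq]
  · rw [Lagrange.degree_nodal, degree_eq_natDegree hf.ne_zero, hf.natDegree_eq]
  · rw [hf.monic.leadingCoeff, Lagrange.nodal_monic.leadingCoeff]
  · intro i hi
    rw [hroot i hi, Lagrange.eval_nodal_at_node hi]

lemma isMonicOfDegree_pPoly (n : ℕ) : IsMonicOfDegree (pPoly n) (n + 1) := by
  induction n using Nat.twoStepInduction with
  | zero => exact isMonicOfDegree_X ℝ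
  | one => exact (isMonicOfDegree_X ℝ).mul (by simpa using isMonicOfDegree_X_sub_one (1 : ℝ))
  | more n ih₀ ih₁ =>
    rw [pPoly, show n + 2 + 1 = 1 + (n + 1 + 1) by omega]
    exact (isMonicOfDegree_X ℝ).mul (ih₁.sub (by rw [ih₀.natDegree_eq]; omega))

lemma X_pow_dvd_pPoly (n : ℕ) : X ^ ((n + 2) / 2) ∣ pPoly n := by
  induction n using Nat.twoStepInduction with
  | zero => simp [pPoly]
  | one => simp [pPoly]
  | more n ih₀ ih₁ =>
    have h₁ : X ^ ((n + 2) / 2) ∣ pPoly (n + 1) := (pow_dvd_pow X (by omega)).trans ih₁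
    rw [show (n + 2 + 2) / 2 = (n + 2) / 2 + 1 by omega, pow_succ', pPoly]
    exact mul_dvd_mul_left X (h₁.sub ih₀)

lemma p_four_mul_cos_sq_mul_sin (n : ℕ) (θ : ℝ) :
    p n (4 * cos θ ^ 2) * sin θ = (2 * cos θ) ^ (n + 1) * sin ((n + 2) * θ) := by
  induction n using Nat.twoStepInduction with
  | zero =>
    norm_num [p, sin_two_mul]
    ring
  | one =>
    have h3 : sin (3 * θ) = sin (2 * θ + θ) := by ring_nf
    rw [sin_add, sin_two_mul, cos_two_mul] at h3
    norm_num [p]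
    linear_combination (-4 * cos θ ^ 2) * h3
  | more n ih₀ ih₁ =>
    have hrec : sin ((n + 4) * θ) = 2 * cos θ * sin ((n + 3) * θ) - sin ((n + 2) * θ) := by
      have hadd := sin_add ((n + 3) * θ) θ
      have hsub := sin_sub ((n + 3) * θ) θ
      ring_nf at hadd hsub ⊢
      linarith
    rw [p]
    push_cast at ih₀ ih₁ ⊢
    ring_nf at ih₀ ih₁ hrec ⊢
    linear_combination (4 * cos θ ^ 2) * (ih₁ - ih₀) - (2 * cos θ) ^ (n + 3) * hrec

noncomputable def cosNode (n k : ℕ) : ℝ := 4 * cos (k * π / (n + 2)) ^ 2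

lemma p_cosNode {n k : ℕ} (hk₀ : 0 < k) (hkn : k < n + 2) : p n (cosNode n k) = 0 := by
  set θ : ℝ := k * π / (n + 2)
  have hθ : (n + 2 : ℝ) * θ = k * π := by simp only [θ]; field_simp
  have hsin : sin θ ≠ 0 := by
    refine (sin_pos_of_pos_of_lt_pi (by positivity) ?_).ne'
    rw [div_lt_iff₀ (by positivity)]
    have : (k : ℝ) < n + 2 := by exact_mod_cast hkn
    nlinarith [pi_pos]
  have h := p_four_mul_cos_sq_mul_sin n θ
  rw [hθ, sin_nat_mul_pi, mul_zero] at h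
  exact (mul_eq_zero.mp h).resolve_right hsin

lemma cosNode_angle_mem {n k : ℕ} (hk : 2 * k ≤ n + 2) : k * π / (n + 2) ∈ Set.Icc 0 (π / 2) := by
  refine ⟨by positivity, ?_⟩
  rw [div_le_iff₀ (by positivity)]
  have : (2 * k : ℝ) ≤ n + 2 := by exact_mod_cast hk
  nlinarith [pi_pos]

lemma cosNode_strictAntiOn (n : ℕ) : StrictAntiOn (cosNode n) {k | 2 * k ≤ n + 2} := by
  intro j hj k hk hjk
  have hj' := cosNode_angle_mem hj
  have hk' := cosNode_angle_mem hk
  have hcos : cos (k * π / (n + 2)) < cos (j * π / (n + 2)) := by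
    refine strictAntiOn_cos ⟨hj'.1, by linarith [hj'.2, pi_pos]⟩
      ⟨hk'.1, by linarith [hk'.2, pi_pos]⟩ ?_
    gcongr
  have : 0 ≤ cos (k * π / (n + 2)) := cos_nonneg_of_mem_Icc ⟨by linarith [hk'.1, pi_pos], hk'.2⟩
  unfold cosNode
  gcongr

lemma cosNode_pos {n k : ℕ} (hk : 2 * k < n + 2) : 0 < cosNode n k := by
  have hlt : k * π / (n + 2) < π / 2 := by
    rw [div_lt_iff₀ (by positivity)]
    have : (2 * k : ℝ) < n + 2 := by exact_mod_cast hk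
    nlinarith [pi_pos]
  have : 0 < cos (k * π / (n + 2)) :=
    cos_pos_of_mem_Ioo ⟨by linarith [pi_pos, (cosNode_angle_mem hk.le).1], hlt⟩
  unfold cosNode
  positivity

lemma cosNode_two_mul_self_add_one (m : ℕ) : cosNode (2 * m) (m + 1) = 0 := by
  have : ((m + 1 : ℕ) : ℝ) * π / ((2 * m : ℕ) + 2) = π / 2 := by
    push_cast
    field_simp
  rw [cosNode, this, cos_pi_div_two]
  norm_num

lemma pPoly_eq_X_pow_mul_prod (n : ℕ) :
    pPoly n = X ^ ((n + 2) / 2) * ∏ k ∈ Icc 1 ((n + 1) / 2), (X - C (cosNode n k)) := by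
  obtain ⟨R, hR⟩ := X_pow_dvd_pPoly n
  have hRdeg : IsMonicOfDegree R (Icc 1 ((n + 1) / 2)).card := by
    refine (isMonicOfDegree_X_pow ℝ ((n + 2) / 2)).of_mul_left ?_
    rw [← hR, Nat.card_Icc, show (n + 2) / 2 + ((n + 1) / 2 + 1 - 1) = n + 1 by omega]
    exact isMonicOfDegree_pPoly n
  have hroot (k : ℕ) (hk : k ∈ Icc 1 ((n + 1) / 2)) : R.eval (cosNode n k) = 0 := by
    rw [mem_Icc] at hk
    have h := p_cosNode (n := n) (k := k) (by omega) (by omega)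
    rw [← eval_pPoly, hR, eval_mul, eval_pow, eval_X] at h
    exact (mul_eq_zero.mp h).resolve_left (pow_ne_zero _ (cosNode_pos (by omega)).ne')
  have hinj : Set.InjOn (cosNode n) (Icc 1 ((n + 1) / 2) : Set ℕ) :=
    (cosNode_strictAntiOn n).injOn.mono fun k hk => by
      simp only [coe_Icc, Set.mem_Icc, Set.mem_ofPred_eq] at hk ⊢
      omega
  rw [hR, hRdeg.eq_nodal hinj hroot, Lagrange.nodal_eq]

theorem stmt_2 (n : ℕ) (x : ℝ) :
    p n x = x ^ ((n+1)/2) *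
      ∏ k ∈ Finset.Icc 1 ((n+2)/2),
        (x - 4 * Real.cos ((k : ℝ) * Real.pi / ((n : ℝ) + 2)) ^ 2) := by
  change _ = x ^ ((n + 1) / 2) * ∏ k ∈ Icc 1 ((n + 2) / 2), (x - cosNode n k)
  rw [← eval_pPoly, pPoly_eq_X_pow_mul_prod]
  simp only [eval_mul, eval_pow, eval_X, eval_prod, eval_sub, eval_C]
  obtain ⟨m, rfl | rfl⟩ := Nat.even_or_odd' n
  · rw [show (2 * m + 2) / 2 = m + 1 by omega, show (2 * m + 1) / 2 = m by omega,
      prod_Icc_succ_top (by omega), cosNode_two_mul_self_add_one, sub_zero]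
    ring
  · rw [show (2 * m + 1 + 2) / 2 = m + 1 by omega, show (2 * m + 1 + 1) / 2 = m + 1 by omega]
end

section
/- For all n ≥ 0, the largest real root of p_n equals 4cos²(π/(n+2)). -/
/-!
Substituting `x = 4 cos² θ` turns the recurrence into that of `sin ((n + 2) θ)`:
`sin θ · p n (4 cos² θ) = (2 cos θ)ⁿ⁺¹ · sin ((n + 2) θ)`. Hence `θ = π / (n + 2)` gives a root,
while for `0 < θ < π / (n + 2)` the right-hand side is positive, so `p n` has no root in
`(4 cos² (π / (n + 2)), 4)`. On `[4, ∞)` the sequence `p n x` is positive and at least doubles.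
-/

open Real Finset

theorem sin_mul_p_four_cos_sq (θ : ℝ) (n : ℕ) :
    sin θ * p n (4 * cos θ ^ 2) = (2 * cos θ) ^ (n + 1) * sin ((n + 2) * θ) := by
  induction n using Nat.twoStepInduction with
  | zero =>
    rw [p, Nat.cast_zero, zero_add (2 : ℝ), sin_two_mul]
    ring
  | one =>
    rw [p, Nat.cast_one, show (1 + 2 : ℝ) * θ = 3 * θ by ring, sin_three_mul]
    linear_combination 16 * cos θ ^ 2 * sin θ * sin_sq θ
  | more m ih₀ ih₁ =>
    have sin_rec : sin ((m + 2 + 2) * θ) = 2 * cos θ * sin ((m + 1 + 2) * θ) - sin ((m + 2) * θ) := by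
      rw [show ((m : ℝ) + 2 + 2) * θ = (m + 1 + 2) * θ + θ by ring,
        show ((m : ℝ) + 2) * θ = (m + 1 + 2) * θ - θ by ring, sin_add, sin_sub]
      ring
    push_cast at ih₁ ⊢
    rw [p, sin_rec]
    linear_combination 4 * cos θ ^ 2 * ih₁ - 4 * cos θ ^ 2 * ih₀

theorem p_four_cos_sq_pi_div_eq_zero (n : ℕ) : p n (4 * cos (π / (n + 2)) ^ 2) = 0 := by
  have hn : (0 : ℝ) < n + 2 := by positivity
  have hsin : sin (π / (n + 2)) ≠ 0 :=
    (sin_pos_of_pos_of_lt_pi (by positivity) (div_lt_self pi_pos (by linarith))).ne'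
  have h := sin_mul_p_four_cos_sq (π / (n + 2)) n
  rw [mul_div_cancel₀ π hn.ne', sin_pi, mul_zero] at h
  exact (mul_eq_zero.mp h).resolve_left hsin

theorem p_four_cos_sq_pos (n : ℕ) {θ : ℝ} (hθ : 0 < θ) (hθn : (n + 2) * θ < π) :
    0 < p n (4 * cos θ ^ 2) := by
  have hθπ : θ < π / 2 := by nlinarith [(Nat.cast_nonneg n : (0 : ℝ) ≤ n)]
  have hcos : 0 < cos θ := cos_pos_of_mem_Ioo ⟨by linarith, hθπ⟩
  have hsin : 0 < sin θ := sin_pos_of_pos_of_lt_pi hθ (by linarith)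
  have hsin_n : 0 < sin ((n + 2) * θ) := sin_pos_of_pos_of_lt_pi (by positivity) hθn
  have h := sin_mul_p_four_cos_sq θ n
  have : 0 < sin θ * p n (4 * cos θ ^ 2) := by rw [h]; positivity
  exact pos_of_mul_pos_right this hsin.le

theorem p_pos_and_two_mul_le_of_four_le {x : ℝ} (hx : 4 ≤ x) (n : ℕ) :
    0 < p n x ∧ 2 * p n x ≤ p (n + 1) x := by
  induction n with
  | zero =>
    simp only [p]
    constructor <;> nlinarith
  | succ m ih =>
    obtain ⟨hpos, hdouble⟩ := ih
    refine ⟨by linarith, ?_⟩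
    show 2 * p (m + 1) x ≤ x * (p (m + 1) x - p m x)
    nlinarith

theorem exists_four_cos_sq_eq {θ x : ℝ} (hθ₀ : 0 ≤ θ) (hθ : θ ≤ π / 2)
    (hθx : 4 * cos θ ^ 2 < x) (hx : x < 4) : ∃ φ, 0 < φ ∧ φ < θ ∧ 4 * cos φ ^ 2 = x := by
  have hcos : 0 ≤ cos θ := cos_nonneg_of_mem_Icc ⟨by linarith, hθ⟩
  have hx₀ : 0 ≤ x := (by positivity : (0 : ℝ) ≤ 4 * cos θ ^ 2).trans hθx.le
  have hlt : 2 * cos θ < √x := (lt_sqrt (by positivity)).mpr (by linarith)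
  have hsqrt : √x < 2 := (sqrt_lt' two_pos).mpr (by linarith)
  refine ⟨arccos (√x / 2), arccos_pos.mpr (by linarith), ?_, ?_⟩
  · calc arccos (√x / 2) < arccos (cos θ) :=
          arccos_lt_arccos (by linarith [neg_one_le_cos θ]) (by linarith) (by linarith)
      _ = θ := arccos_cos hθ₀ (by linarith [pi_pos])
  · rw [cos_arccos (by linarith [sqrt_nonneg x]) (by linarith), div_pow, sq_sqrt hx₀]
    ring

theorem p_pos_of_four_cos_sq_pi_div_lt (n : ℕ) {x : ℝ} (hx : 4 * cos (π / (n + 2)) ^ 2 < x) :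
    0 < p n x := by
  rcases le_or_gt 4 x with h4 | h4
  · exact (p_pos_and_two_mul_le_of_four_le h4 n).1
  have hn : (2 : ℝ) ≤ n + 2 := by linarith [(Nat.cast_nonneg n : (0 : ℝ) ≤ n)]
  obtain ⟨φ, hφ, hφθ, rfl⟩ := exists_four_cos_sq_eq (by positivity)
    (div_le_div_of_nonneg_left pi_pos.le two_pos hn) hx h4
  exact p_four_cos_sq_pos n hφ ((lt_div_iff₀' (by linarith)).mp hφθ)

theorem stmt_3 (n : ℕ) :
    IsGreatest {x : ℝ | p n x = 0} (4 * Real.cos (Real.pi / ((n : ℝ) + 2)) ^ 2) :=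
  ⟨p_four_cos_sq_pi_div_eq_zero n, fun _ hx =>
    le_of_not_gt fun hlt => (p_pos_of_four_cos_sq_pi_div_lt n hlt).ne' hx⟩
end

section
/- For all n ≥ 0 and all real x with x ≥ α_{n+2} = 4cos²(π/(n+4)), we have p_{n+1}(x) ≥ p_n(x). -/
/-!
Substituting `x = 4 cos² θ` turns the recurrence into the one of `sin ((k + 2) θ)`:
`sin θ · p_k(4 cos² θ) = (2 cos θ)^(k+1) sin ((k + 2) θ)`, so `p_k(x) ≥ 0` as soon as
`x ≥ 4 cos² (π / (k + 2))` (for `x ≥ 4` one checks `0 ≤ 2 p_k ≤ p_{k+1}` directly).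
Since `p_{n+2}(x) = x (p_{n+1}(x) - p_n(x))` with `x > 0`, the claim is `p_{n+2}(x) ≥ 0`.
-/

open Real Finset

lemma p_add_two (k : ℕ) (x : ℝ) : p (k + 2) x = x * (p (k + 1) x - p k x) := rfl

lemma p_nonneg_and_two_mul_le_of_four_le {x : ℝ} (hx : 4 ≤ x) (k : ℕ) :
    0 ≤ p k x ∧ 2 * p k x ≤ p (k + 1) x := by
  induction k with
  | zero =>
    simp only [p]
    constructor <;> nlinarith
  | succ m ih =>
    obtain ⟨hm, hm'⟩ := ih
    refine ⟨by linarith, ?_⟩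
    rw [p_add_two]
    nlinarith

lemma sin_mul_p_four_mul_cos_sq (θ : ℝ) (k : ℕ) :
    sin θ * p k (4 * cos θ ^ 2) = (2 * cos θ) ^ (k + 1) * sin ((k + 2) * θ) := by
  induction k using Nat.twoStepInduction with
  | zero =>
    simp only [p, Nat.cast_zero, zero_add, sin_two_mul]
    ring
  | one =>
    simp only [p, Nat.cast_one, show ((1 : ℝ) + 2) * θ = 3 * θ by ring, sin_three_mul]
    linear_combination (16 * cos θ ^ 2 * sin θ) * sin_sq_add_cos_sq θ
  | more m ih₀ ih₁ =>
    push_cast at ih₁ ⊢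
    rw [show ((m : ℝ) + 2) * θ = (m + 1 + 2) * θ - θ by ring, sin_sub] at ih₀
    rw [p_add_two, show ((m : ℝ) + 2 + 2) * θ = (m + 1 + 2) * θ + θ by ring, sin_add]
    linear_combination (4 * cos θ ^ 2) * (ih₁ - ih₀)

lemma p_four_mul_cos_sq_nonneg {θ : ℝ} {k : ℕ} (hθ : 0 < θ) (hkθ : (k + 2) * θ ≤ π) :
    0 ≤ p k (4 * cos θ ^ 2) := by
  have hθ_half : θ ≤ π / 2 := by
    have : 2 * θ ≤ (k + 2) * θ := by gcongr; linarith [k.cast_nonneg (α := ℝ)]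
    linarith
  have hsin : 0 < sin θ := sin_pos_of_pos_of_lt_pi hθ (by linarith [pi_pos])
  have hcos : 0 ≤ cos θ := cos_nonneg_of_mem_Icc ⟨by linarith, hθ_half⟩
  have hrhs : 0 ≤ (2 * cos θ) ^ (k + 1) * sin ((k + 2) * θ) :=
    mul_nonneg (by positivity) (sin_nonneg_of_nonneg_of_le_pi (by positivity) hkθ)
  rw [← sin_mul_p_four_mul_cos_sq] at hrhs
  exact nonneg_of_mul_nonneg_right hrhs hsin

lemma p_nonneg_of_four_mul_cos_sq_le {k : ℕ} {x : ℝ}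
    (hx : 4 * cos (π / (k + 2)) ^ 2 ≤ x) : 0 ≤ p k x := by
  rcases le_or_gt 4 x with h4 | h4
  · exact (p_nonneg_and_two_mul_le_of_four_le h4 k).1
  have hx0 : 0 ≤ x := le_trans (by positivity) hx
  have hk : (0 : ℝ) < k + 2 := by positivity
  set t := √x / 2 with ht
  have ht1 : t < 1 := by
    have : √x < 2 := (sqrt_lt' two_pos).2 (by linarith)
    linarith [ht]
  have hct : cos (π / (k + 2)) ≤ t := by
    have : |2 * cos (π / (k + 2))| ≤ √x := abs_le_sqrt (by linarith)
    linarith [le_abs_self (2 * cos (π / (k + 2))), ht]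
  have hx_eq : 4 * cos (arccos t) ^ 2 = x := by
    rw [cos_arccos (by linarith [sqrt_nonneg x]) ht1.le, div_pow, sq_sqrt hx0]
    ring
  have hθ_le : arccos t ≤ π / (k + 2) := by
    calc arccos t ≤ arccos (cos (π / (k + 2))) := arccos_le_arccos hct
      _ = π / (k + 2) :=
        arccos_cos (by positivity) (div_le_self pi_pos.le (by linarith [k.cast_nonneg (α := ℝ)]))
  rw [← hx_eq]
  refine p_four_mul_cos_sq_nonneg (arccos_pos.2 ht1) ?_
  calc (k + 2) * arccos t ≤ (k + 2) * (π / (k + 2)) := by gcongr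
    _ = π := mul_div_cancel₀ π hk.ne'

theorem stmt_7 (n : ℕ) (x : ℝ)
    (hx : x ≥ 4 * Real.cos (Real.pi / ((n : ℝ) + 4)) ^ 2) :
    p (n+1) x ≥ p n x := by
  have hcos : 0 < cos (π / (n + 4)) := by
    refine cos_pos_of_mem_Ioo ⟨by linarith [pi_pos, div_pos pi_pos (by positivity : (0 : ℝ) < n + 4)], ?_⟩
    exact div_lt_div_of_pos_left pi_pos two_pos (by linarith [n.cast_nonneg (α := ℝ)])
  have hx0 : 0 < x := lt_of_lt_of_le (by positivity) hx
  have hp : 0 ≤ p (n + 2) x := by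
    refine p_nonneg_of_four_mul_cos_sq_le ?_
    push_cast
    rwa [show (n : ℝ) + 2 + 2 = n + 4 by ring]
  rw [p_add_two] at hp
  exact sub_nonneg.1 (nonneg_of_mul_nonneg_right hp hx0)
end

section
/- For all n ≥ 0 and all real x with α_{n+1} < x < α_{n+2} (where α_m = 4cos²(π/(m+2))), we have p_{n+1}(x) < p_n(x). -/
open Real Finset

/-!
Substituting `x = 4 cos² θ` turns the recursion of `p` into the three-term recurrence of `sin (k θ)`,
so that `p n (4 cos² θ) sin 2θ = (2 cos θ)^(n+2) sin ((n+2) θ)`. Since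
`p (n+2) x = x (p (n+1) x - p n x)`, the claim is that `p (n+2) x < 0` on the given interval;
there `θ ∈ (π/(n+4), π/(n+3))`, so `(n+4) θ ∈ (π, 2π)` while `sin 2θ` and `cos θ` are positive.
-/

lemma sin_add_two_mul_eq (m θ : ℝ) :
    sin ((m + 2) * θ) = 2 * cos θ * sin ((m + 1) * θ) - sin (m * θ) := by
  have hm2 : (m + 2) * θ = (m + 1) * θ + θ := by ring
  have hm : m * θ = (m + 1) * θ - θ := by ring
  rw [hm2, hm, sin_add, sin_sub]
  ring

lemma p_four_mul_cos_sq_mul_sin_two_mul :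
    ∀ (n : ℕ) (θ : ℝ), p n (4 * cos θ ^ 2) * sin (2 * θ) =
      (2 * cos θ) ^ (n + 2) * sin ((n + 2) * θ)
  | 0, θ => by simp only [p, Nat.cast_zero, zero_add]; ring
  | 1, θ => by
    have h3 : ((1 : ℕ) + 2 : ℝ) * θ = 3 * θ := by norm_num
    rw [h3, sin_three_mul, sin_two_mul]
    simp only [p]
    linear_combination 32 * cos θ ^ 3 * sin θ * sin_sq_add_cos_sq θ
  | (n+2), θ => by
    have ih₁ := p_four_mul_cos_sq_mul_sin_two_mul (n + 1) θ
    have ih₀ := p_four_mul_cos_sq_mul_sin_two_mul n θ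
    have hsin := sin_add_two_mul_eq ((n : ℝ) + 2) θ
    rw [show (n : ℝ) + 2 + 1 = n + 1 + 2 by ring] at hsin
    simp only [p]
    push_cast at ih₁ ⊢
    linear_combination 4 * cos θ ^ 2 * (ih₁ - ih₀) - (2 * cos θ) ^ (n + 4) * hsin

lemma p_add_two_four_mul_cos_sq_neg {n : ℕ} {θ : ℝ}
    (hθ : θ ∈ Set.Ioo (π / (n + 4)) (π / (n + 3))) :
    p (n + 2) (4 * cos θ ^ 2) < 0 := by
  obtain ⟨hlo, hhi⟩ := hθ
  have hn : (0 : ℝ) ≤ n := n.cast_nonneg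
  rw [div_lt_iff₀ (by positivity)] at hlo
  rw [lt_div_iff₀ (by positivity)] at hhi
  have hθ_pos : 0 < θ := by nlinarith [pi_pos]
  have hθ_small : 3 * θ < π := by nlinarith
  have hcos : 0 < cos θ := cos_pos_of_mem_Ioo ⟨by linarith, by linarith⟩
  have hsin_two : 0 < sin (2 * θ) := sin_pos_of_pos_of_lt_pi (by linarith) (by linarith)
  have hsin : sin ((↑(n + 2) + 2) * θ) < 0 := by
    rw [← sin_sub_two_pi]
    push_cast
    exact sin_neg_of_neg_of_neg_pi_lt (by nlinarith) (by nlinarith)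
  have hformula := p_four_mul_cos_sq_mul_sin_two_mul (n + 2) θ
  have hrhs : (2 * cos θ) ^ (n + 2 + 2) * sin ((↑(n + 2) + 2) * θ) < 0 :=
    mul_neg_of_pos_of_neg (by positivity) hsin
  rw [← hformula] at hrhs
  exact neg_of_mul_neg_left hrhs hsin_two.le

theorem stmt_8 (n : ℕ) (x : ℝ)
    (h1 : 4 * Real.cos (Real.pi / ((n : ℝ) + 3)) ^ 2 < x)
    (h2 : x < 4 * Real.cos (Real.pi / ((n : ℝ) + 4)) ^ 2) :
    p (n+1) x < p n x := by
  have hle : π / ((n : ℝ) + 4) ≤ π / ((n : ℝ) + 3) :=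
    div_le_div_of_nonneg_left pi_pos.le (by positivity) (by linarith)
  obtain ⟨θ, hθ, rfl⟩ := intermediate_value_Ioo' hle
    (by fun_prop : Continuous fun θ : ℝ => 4 * cos θ ^ 2).continuousOn ⟨h1, h2⟩
  have hx : 0 < 4 * cos θ ^ 2 := (by positivity : (0 : ℝ) ≤ _).trans_lt h1
  have hneg := p_add_two_four_mul_cos_sq_neg hθ
  rw [p] at hneg
  exact sub_neg.mp (neg_of_mul_neg_right hneg hx.le)
end

section
/- For all n ≥ 0, 2cos^{n+1}(π/(n+3)) ≥ 1. -/
/-!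
Write `N = n + 1`. For `N = 1, 2` the inequality is an equality (`cos (π/3) = 1/2`,
`cos² (π/4) = 1/2`). For `N ≥ 3` it suffices to show `cos (π/(N+2)) ≥ exp (-(log 2)/N)`,
since the `N`-th power of the right-hand side is `1/2`. This follows from the Taylor bounds
`cos x ≥ 1 - x²/2` and `exp a ≥ 1 + a + a²/2`, whose product is at least `1` for
`x = π/(N+2)`, `a = (log 2)/N`, by a polynomial inequality in `N` using `π² < 10` and
`log 2 > 0.69`.
-/

open Real

lemma one_le_two_mul_pow_of_exp_neg_log_two_div_le {c : ℝ} {N : ℕ} (hN : N ≠ 0)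
    (h : exp (-(log 2 / N)) ≤ c) : 1 ≤ 2 * c ^ N := by
  have hpow : exp (-(log 2 / N)) ^ N = 1 / 2 := by
    rw [← exp_nat_mul, mul_neg, mul_div_cancel₀ _ (Nat.cast_ne_zero.mpr hN), exp_neg,
      exp_log two_pos, one_div]
  have := pow_le_pow_left₀ (exp_pos _).le h N
  linarith

lemma exp_neg_le_cos_of_one_le_mul {x a : ℝ} (ha : 0 ≤ a)
    (h : 1 ≤ (1 - x ^ 2 / 2) * (1 + a + a ^ 2 / 2)) : exp (-a) ≤ cos x := by
  have hq : 0 < 1 + a + a ^ 2 / 2 := by positivity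
  calc exp (-a) = (exp a)⁻¹ := exp_neg a
    _ ≤ (1 + a + a ^ 2 / 2)⁻¹ := inv_anti₀ hq (quadratic_le_exp_of_nonneg ha)
    _ ≤ 1 - x ^ 2 / 2 := (inv_le_iff_one_le_mul₀ hq).mpr (by linarith)
    _ ≤ cos x := one_sub_sq_div_two_le_cos

lemma one_le_quadratic_cos_mul_quadratic_exp {N : ℝ} (hN : 3 ≤ N) :
    1 ≤ (1 - (π / (N + 2)) ^ 2 / 2) * (1 + log 2 / N + (log 2 / N) ^ 2 / 2) := by
  have hN0 : 0 < N := by linarith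
  have hpi : π ^ 2 < 10 := by nlinarith [pi_lt_d2, pi_pos]
  have hlog : 0.69 < log 2 := by linarith [log_two_gt_d9]
  have hcos : 1 - 10 / (N + 2) ^ 2 / 2 ≤ 1 - (π / (N + 2)) ^ 2 / 2 := by
    rw [div_pow]
    gcongr
  have hexp : 1 + 0.69 / N + (0.69 / N) ^ 2 / 2 ≤ 1 + log 2 / N + (log 2 / N) ^ 2 / 2 := by
    gcongr
  have hpoly : 1 ≤ (1 - 10 / (N + 2) ^ 2 / 2) * (1 + 0.69 / N + (0.69 / N) ^ 2 / 2) := by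
    rw [div_pow, ← sub_nonneg]
    have hnum : 0 ≤ ((N + 2) ^ 2 - 5) * (N ^ 2 + 0.69 * N + 0.69 ^ 2 / 2) - N ^ 2 * (N + 2) ^ 2 := by
      nlinarith [mul_nonneg (sub_nonneg.mpr hN) hN0.le]
    have : (1 - 10 / (N + 2) ^ 2 / 2) * (1 + 0.69 / N + 0.69 ^ 2 / N ^ 2 / 2) - 1
        = (((N + 2) ^ 2 - 5) * (N ^ 2 + 0.69 * N + 0.69 ^ 2 / 2) - N ^ 2 * (N + 2) ^ 2)
          / (N ^ 2 * (N + 2) ^ 2) := by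
      field_simp
      ring
    rw [this]
    exact div_nonneg hnum (by positivity)
  have hcos0 : 0 ≤ 1 - 10 / (N + 2) ^ 2 / 2 := by
    rw [sub_nonneg, div_div, div_le_one (by positivity)]
    nlinarith
  calc 1 ≤ _ := hpoly
    _ ≤ _ := mul_le_mul hcos hexp (by positivity) (hcos0.trans hcos)

lemma one_le_two_mul_cos_pi_div_add_two_pow {N : ℕ} (hN : 3 ≤ N) :
    1 ≤ 2 * cos (π / (N + 2)) ^ N := by
  have hN' : (3 : ℝ) ≤ N := by exact_mod_cast hN
  refine one_le_two_mul_pow_of_exp_neg_log_two_div_le (by omega) ?_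
  exact exp_neg_le_cos_of_one_le_mul (by positivity) (one_le_quadratic_cos_mul_quadratic_exp hN')

theorem stmt_10 (n : ℕ) :
    2 * Real.cos (Real.pi / ((n : ℝ) + 3)) ^ (n + 1) ≥ 1 := by
  match n with
  | 0 => norm_num [cos_pi_div_three]
  | 1 =>
    have h : π / ((1 : ℕ) + 3) = π / 4 := by norm_num
    rw [h, cos_pi_div_four, div_pow, sq_sqrt zero_le_two]
    norm_num
  | k + 2 =>
    have h : ((k + 2 : ℕ) : ℝ) + 3 = ((k + 3 : ℕ) : ℝ) + 2 := by push_cast; ring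
    rw [h]
    exact one_le_two_mul_cos_pi_div_add_two_pow (by omega)
end

section
/- For all n ≥ 0, the polynomial p_n is strictly increasing on the interval [α_n, ∞), where α_n = 4cos²(π/(n+2)) is its largest real root. -/
open Real Finset

/-!
Substituting `x = 4 cos² θ` turns the recurrence into the sine addition formula:
`p n (4 cos² θ) · sin θ = (2 cos θ)^(n+1) · sin((n+2)θ)`. Hence the `⌈n/2⌉` distinct
positive numbers `4 cos²(kπ/(n+2))`, `1 ≤ k ≤ ⌈n/2⌉`, are roots of `p n`, and `x^(⌊n/2⌋+1)`
divides it as well. Comparing degrees, `p n x = x^(⌊n/2⌋+1) · ∏ₖ (x - 4 cos²(kπ/(n+2)))`,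
whose largest root is the one with `k = 1`. Beyond it every factor is nonnegative and
increasing, and `x^(⌊n/2⌋+1)` strictly so.
-/

open Polynomial

theorem strictMonoOn_pow_mul_prod_sub {ι : Type*} (s : Finset ι) (r : ι → ℝ) {α : ℝ}
    (hα : 0 ≤ α) (hr : ∀ k ∈ s, r k ≤ α) {m : ℕ} (hm : m ≠ 0) :
    StrictMonoOn (fun x => x ^ m * ∏ k ∈ s, (x - r k)) (Set.Ici α) := by
  intro a ha b hb hab
  have ha0 : 0 ≤ a := hα.trans ha
  calc a ^ m * ∏ k ∈ s, (a - r k)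
      ≤ a ^ m * ∏ k ∈ s, (b - r k) := by
        gcongr
        exact fun k hk => sub_nonneg.2 ((hr k hk).trans ha)
    _ < b ^ m * ∏ k ∈ s, (b - r k) := by
        gcongr
        exact prod_pos fun k hk => sub_pos.2 ((hr k hk).trans_lt (ha.trans_lt hab))

namespace p

noncomputable def poly : ℕ → ℝ[X]
  | 0 => X
  | 1 => X * (X - C 1)
  | (n+2) => X * (poly (n+1) - poly n)

theorem eval_poly : ∀ (n : ℕ) (x : ℝ), (poly n).eval x = p n x
  | 0, x => by simp [poly, p]
  | 1, x => by simp [poly, p]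
  | (n+2), x => by
      simp only [poly, p, eval_mul, eval_X, eval_sub, eval_poly (n+1) x, eval_poly n x]

theorem X_pow_dvd_poly : ∀ n : ℕ, (X : ℝ[X]) ^ (n / 2 + 1) ∣ poly n
  | 0 => by simp [poly]
  | 1 => by simp [poly]
  | (n+2) => by
      have h₀ := X_pow_dvd_poly n
      have h₁ := (pow_dvd_pow X (by omega : n / 2 + 1 ≤ (n+1) / 2 + 1)).trans
        (X_pow_dvd_poly (n+1))
      rw [show (n + 2) / 2 + 1 = (n / 2 + 1) + 1 by omega, pow_succ']
      exact mul_dvd_mul_left X (dvd_sub h₁ h₀)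

theorem monic_poly_and_natDegree_poly : ∀ n : ℕ, (poly n).Monic ∧ (poly n).natDegree = n + 1
  | 0 => ⟨monic_X, natDegree_X⟩
  | 1 => by
      have h := monic_X_sub_C (1 : ℝ)
      refine ⟨monic_X.mul h, ?_⟩
      rw [poly, monic_X.natDegree_mul h, natDegree_X, natDegree_X_sub_C]
  | (n+2) => by
      obtain ⟨-, hd₀⟩ := monic_poly_and_natDegree_poly n
      obtain ⟨hm₁, hd₁⟩ := monic_poly_and_natDegree_poly (n+1)
      have hlt : (poly n).natDegree < (poly (n+1)).natDegree := by omega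
      have hm : (poly (n+1) - poly n).Monic :=
        hm₁.sub_of_left (degree_lt_degree hlt)
      refine ⟨monic_X.mul hm, ?_⟩
      rw [poly, monic_X.natDegree_mul hm, natDegree_X,
        natDegree_sub_eq_left_of_natDegree_lt hlt, hd₁]
      omega

theorem mul_sin (θ : ℝ) : ∀ n : ℕ,
    p n (4 * cos θ ^ 2) * sin θ = (2 * cos θ) ^ (n + 1) * sin ((n + 2) * θ)
  | 0 => by
      simp only [p]
      rw [show ((0 : ℕ) + 2 : ℝ) * θ = 2 * θ by norm_num, sin_two_mul]
      ring
  | 1 => by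
      simp only [p]
      rw [show ((1 : ℕ) + 2 : ℝ) * θ = 3 * θ by norm_num, sin_three_mul]
      linear_combination (16 * cos θ ^ 2 * sin θ) * sin_sq_add_cos_sq θ
  | (n+2) => by
      have h₀ := mul_sin θ n
      have h₁ := mul_sin θ (n+1)
      have hsum : sin ((n + 4) * θ) + sin ((n + 2) * θ) = 2 * sin ((n + 3) * θ) * cos θ := by
        rw [show ((n : ℝ) + 4) * θ = (n + 3) * θ + θ by ring,
          show ((n : ℝ) + 2) * θ = (n + 3) * θ - θ by ring, sin_add, sin_sub]
        ring
      simp only [p]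
      push_cast at h₀ h₁ ⊢
      ring_nf at h₀ h₁ hsum ⊢
      linear_combination (4 * cos θ ^ 2) * (h₁ - h₀) - (2 * cos θ) ^ (n + 3) * hsum

noncomputable def root (n k : ℕ) : ℝ := 4 * cos (k * π / (n + 2)) ^ 2

theorem eval_root {n k : ℕ} (hk₀ : 0 < k) (hk : k < n + 2) : p n (root n k) = 0 := by
  set θ : ℝ := k * π / (n + 2)
  have hn : (0 : ℝ) < n + 2 := by positivity
  have hθ : (n + 2) * θ = k * π := by simp only [θ]; field_simp
  have hsin : 0 < sin θ := by
    refine sin_pos_of_pos_of_lt_pi (by positivity) ?_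
    rw [div_lt_iff₀ hn, mul_comm π]
    gcongr
    exact_mod_cast hk
  have h := mul_sin θ n
  rw [hθ, sin_nat_mul_pi, mul_zero] at h
  exact (mul_eq_zero.1 h).resolve_right hsin.ne'

theorem angle_mem_Ico {n k : ℕ} (hk : k ≤ (n + 1) / 2) :
    (k * π / (n + 2) : ℝ) ∈ Set.Ico 0 (π / 2) := by
  have hn : (0 : ℝ) < n + 2 := by positivity
  refine ⟨by positivity, ?_⟩
  rw [div_lt_iff₀ hn]
  have : 2 * (k : ℝ) < n + 2 := by exact_mod_cast (by omega : 2 * k < n + 2)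
  nlinarith [pi_pos]

theorem root_pos {n k : ℕ} (hk : k ≤ (n + 1) / 2) : 0 < root n k := by
  obtain ⟨h₀, h₁⟩ := angle_mem_Ico hk
  have := cos_pos_of_mem_Ioo ⟨by linarith [pi_pos], h₁⟩
  unfold root
  positivity

theorem root_strictAntiOn (n : ℕ) : StrictAntiOn (root n) (Set.Iic ((n + 1) / 2)) := by
  intro a ha b hb hab
  obtain ⟨ha₀, ha₁⟩ := angle_mem_Ico (n := n) ha
  obtain ⟨hb₀, hb₁⟩ := angle_mem_Ico (n := n) hb
  have hcos : cos (b * π / (n + 2)) < cos (a * π / (n + 2)) := by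
    refine strictAntiOn_cos ⟨ha₀, by linarith⟩ ⟨hb₀, by linarith⟩ ?_
    gcongr
  have := cos_nonneg_of_mem_Icc ⟨by linarith, hb₁.le⟩
  unfold root
  gcongr

theorem poly_eq_X_pow_mul_prod (n : ℕ) :
    poly n = X ^ (n / 2 + 1) * ∏ k ∈ Icc 1 ((n + 1) / 2), (X - C (root n k)) := by
  set s := Icc 1 ((n + 1) / 2)
  have hs : ∀ k ∈ s, k ≤ (n + 1) / 2 := fun k hk => (mem_Icc.1 hk).2
  have hinj : Set.InjOn (root n) s := (root_strictAntiOn n).injOn.mono fun k hk => hs k hk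
  have hprod_dvd : ∏ k ∈ s, (X - C (root n k)) ∣ poly n := by
    refine prod_dvd_of_coprime (fun a ha b hb hab => ?_) fun k hk => ?_
    · exact isCoprime_X_sub_C_of_isUnit_sub
        (isUnit_iff_ne_zero.2 (sub_ne_zero.2 fun h => hab (hinj ha hb h)))
    · rw [dvd_iff_isRoot, IsRoot, eval_poly]
      exact eval_root (mem_Icc.1 hk).1 (by have := hs k hk; omega)
  have hcop : IsCoprime ((X : ℝ[X]) ^ (n / 2 + 1)) (∏ k ∈ s, (X - C (root n k))) := by
    refine IsCoprime.pow_left (IsCoprime.prod_right fun k hk => ?_)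
    have h := isCoprime_X_sub_C_of_isUnit_sub (R := ℝ) (a := 0) (b := root n k)
      (isUnit_iff_ne_zero.2 (by simpa using (root_pos (hs k hk)).ne'))
    rwa [map_zero, sub_zero] at h
  have hmonic : (X ^ (n / 2 + 1) * ∏ k ∈ s, (X - C (root n k))).Monic :=
    (monic_X_pow _).mul (monic_prod_of_monic _ _ fun k _ => monic_X_sub_C _)
  obtain ⟨hmonic_poly, hdeg_poly⟩ := monic_poly_and_natDegree_poly n
  refine eq_of_monic_of_dvd_of_natDegree_le hmonic hmonic_poly
    (hcop.mul_dvd (X_pow_dvd_poly n) hprod_dvd) ?_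
  rw [(monic_X_pow _).natDegree_mul (monic_prod_of_monic _ _ fun k _ => monic_X_sub_C _),
    natDegree_X_pow, natDegree_prod_of_monic _ _ fun k _ => monic_X_sub_C _, hdeg_poly]
  simp only [natDegree_X_sub_C, sum_const, smul_eq_mul, mul_one, Nat.card_Icc, s]
  omega

theorem eq_pow_mul_prod (n : ℕ) :
    p n = fun x => x ^ (n / 2 + 1) * ∏ k ∈ Icc 1 ((n + 1) / 2), (x - root n k) := by
  ext x
  rw [← eval_poly, poly_eq_X_pow_mul_prod]
  simp [eval_prod]

end p

theorem stmt_13 (n : ℕ) :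
    StrictMonoOn (p n) (Set.Ici (4 * Real.cos (Real.pi / ((n : ℝ) + 2)) ^ 2)) := by
  have hα : 4 * cos (π / (n + 2)) ^ 2 = p.root n 1 := by simp [p.root]
  rw [hα, p.eq_pow_mul_prod]
  refine strictMonoOn_pow_mul_prod_sub _ _ (by unfold p.root; positivity)
    (fun k hk => ?_) (by omega)
  obtain ⟨hk₁, hk⟩ := mem_Icc.1 hk
  exact (p.root_strictAntiOn n).antitoneOn (hk₁.trans hk) hk hk₁
end

section
/- For all n ≥ 4, |α_{n+2} − α_{n+1}| ≤ 7³·(n+4)^{−3}/2, i.e., 8(cos²(π/(n+4)) − cos²(π/(n+3))) ≤ 343/(n+4)³, where α_m = 4cos²(π/(m+2)). -/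
/-! Since `cos² a - cos² b = sin² b - sin² a = (sin b - sin a)(sin b + sin a)` and `sin` is
1-Lipschitz with `|sin t| ≤ |t|`, the difference is at most `b² - a²`. For `a = π/(x+4)`,
`b = π/(x+3)` this is `π² (2x + 7) / ((x+3)² (x+4)²)`, and `π² < 10` leaves a polynomial
inequality that holds for every `x ≥ 0`. -/

open Real

lemma Real.sin_sq_sub_sin_sq_le {a b : ℝ} (ha : 0 ≤ a) (hab : a ≤ b) :
    sin b ^ 2 - sin a ^ 2 ≤ b ^ 2 - a ^ 2 :=
  calc sin b ^ 2 - sin a ^ 2 = (sin b - sin a) * (sin b + sin a) := by ring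
    _ ≤ |sin b - sin a| * |sin b + sin a| := by rw [← abs_mul]; exact le_abs_self _
    _ ≤ |b - a| * (|b| + |a|) := by
        refine mul_le_mul (abs_sin_sub_sin_le b a) ?_ (abs_nonneg _) (abs_nonneg _)
        exact (abs_add_le _ _).trans (add_le_add abs_sin_le_abs abs_sin_le_abs)
    _ = b ^ 2 - a ^ 2 := by
        rw [abs_of_nonneg (sub_nonneg.2 hab), abs_of_nonneg (ha.trans hab), abs_of_nonneg ha]
        ring

lemma Real.cos_sq_sub_cos_sq_le {a b : ℝ} (ha : 0 ≤ a) (hab : a ≤ b) :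
    cos a ^ 2 - cos b ^ 2 ≤ b ^ 2 - a ^ 2 := by
  have h := sin_sq_sub_sin_sq_le ha hab
  rw [sin_sq, sin_sq] at h
  linarith

lemma pi_div_add_three_sq_sub_pi_div_add_four_sq_le {x : ℝ} (hx : 0 ≤ x) :
    8 * ((π / (x + 3)) ^ 2 - (π / (x + 4)) ^ 2) ≤ 343 / (x + 4) ^ 3 := by
  have hpi_sq : π ^ 2 < 10 := by nlinarith [pi_pos, pi_lt_d2]
  have hpoly : 8 * π ^ 2 * (2 * x + 7) * (x + 4) ≤ 343 * (x + 3) ^ 2 := by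
    nlinarith [mul_nonneg hx hx]
  have h3 : 0 < x + 3 := by linarith
  have h4 : 0 < x + 4 := by linarith
  calc 8 * ((π / (x + 3)) ^ 2 - (π / (x + 4)) ^ 2)
      = 8 * π ^ 2 * (2 * x + 7) * (x + 4) / ((x + 3) ^ 2 * (x + 4) ^ 3) := by
        field_simp
        ring
    _ ≤ 343 * (x + 3) ^ 2 / ((x + 3) ^ 2 * (x + 4) ^ 3) := by gcongr
    _ = 343 / (x + 4) ^ 3 := by field_simp

theorem stmt_14_general (n : ℕ) :
    8 * (Real.cos (Real.pi / ((n : ℝ) + 4)) ^ 2 - Real.cos (Real.pi / ((n : ℝ) + 3)) ^ 2) ≤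
      343 / ((n : ℝ) + 4) ^ 3 := by
  have hn : (0 : ℝ) ≤ n := n.cast_nonneg
  have hab : π / ((n : ℝ) + 4) ≤ π / ((n : ℝ) + 3) :=
    div_le_div_of_nonneg_left pi_pos.le (by linarith) (by linarith)
  have hcos := cos_sq_sub_cos_sq_le (by positivity) hab
  linarith [pi_div_add_three_sq_sub_pi_div_add_four_sq_le hn]

theorem stmt_14 (n : ℕ) (hn : 4 ≤ n) :
    8 * (Real.cos (Real.pi / ((n : ℝ) + 4)) ^ 2 - Real.cos (Real.pi / ((n : ℝ) + 3)) ^ 2) ≤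
      343 / ((n : ℝ) + 4) ^ 3 :=
  stmt_14_general n
end

section
/- For all n ≥ 0 and all 0 ≤ i ≤ n, p_n(α_{n+2}) · p_i(α_{n+2}) = α_{n+2}^{i+1} · p_{n−i}(α_{n+2}), where α_{n+2} = 4cos²(π/(n+4)). -/
/-!
Put `α = 4 cos² θ` with `θ = π / (n + 4)`. The recurrence `p_{k+2} = α (p_{k+1} - p_k)` is
solved by `p_k(α) sin θ = (2 cos θ)^(k+1) sin((k+2)θ)`, a Chebyshev-type closed form. Since
`(n + 4) θ = π`, the sines of `(k+2)θ` and `(n-k+2)θ` agree, which gives the symmetry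
`(2 cos θ)^(n-k+1) p_k(α) = (2 cos θ)^(k+1) p_{n-k}(α)` and `p_n(α) = (2 cos θ)^(n+2)`;
the identity follows by combining the two.
-/

open Real Finset

theorem p_mul_sin (θ : ℝ) (k : ℕ) :
    p k (4 * cos θ ^ 2) * sin θ = (2 * cos θ) ^ (k + 1) * sin ((k + 2) * θ) := by
  induction k using Nat.twoStepInduction with
  | zero =>
    rw [p, show ((0 : ℕ) + 2 : ℝ) * θ = 2 * θ by norm_num, sin_two_mul]
    ring
  | one =>
    rw [p, show ((1 : ℕ) + 2 : ℝ) * θ = 3 * θ by norm_num, sin_three_mul]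
    linear_combination 16 * cos θ ^ 2 * sin θ * sin_sq_add_cos_sq θ
  | more k ih₀ ih₁ =>
    have hrec : p (k + 2) (4 * cos θ ^ 2) * sin θ
        = 4 * cos θ ^ 2 * (p (k + 1) (4 * cos θ ^ 2) * sin θ - p k (4 * cos θ ^ 2) * sin θ) := by
      rw [p]; ring
    have h₁ : ((k + 1 : ℕ) + 2 : ℝ) * θ = (k + 3) * θ := by push_cast; ring
    have h₂ : ((k + 2 : ℕ) + 2 : ℝ) * θ = (k + 3) * θ + θ := by push_cast; ring
    have h₀ : ((k : ℝ) + 2) * θ = (k + 3) * θ - θ := by ring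
    rw [hrec, ih₀, ih₁, h₁, h₂, h₀, sin_add, sin_sub]
    ring

section

variable {n : ℕ} {θ : ℝ}

theorem pow_mul_p_eq_pow_mul_p_sub (hθ : ((n : ℝ) + 4) * θ = π) (hs : sin θ ≠ 0)
    {k : ℕ} (hk : k ≤ n) :
    (2 * cos θ) ^ (n - k + 1) * p k (4 * cos θ ^ 2)
      = (2 * cos θ) ^ (k + 1) * p (n - k) (4 * cos θ ^ 2) := by
  have hreflect : sin (((n - k : ℕ) + 2 : ℝ) * θ) = sin ((k + 2) * θ) := by
    rw [← sin_pi_sub, ← hθ, Nat.cast_sub hk]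
    ring_nf
  have hexp : n - k + 1 + (k + 1) = k + 1 + (n - k + 1) := by omega
  refine mul_right_cancel₀ hs ?_
  rw [mul_assoc, mul_assoc, p_mul_sin, p_mul_sin, hreflect, ← mul_assoc, ← mul_assoc,
    ← pow_add, ← pow_add, hexp]

theorem p_eq_pow (hθ : ((n : ℝ) + 4) * θ = π) (hs : sin θ ≠ 0) :
    p n (4 * cos θ ^ 2) = (2 * cos θ) ^ (n + 2) := by
  have hreflect : sin ((n + 2 : ℝ) * θ) = sin (2 * θ) := by
    rw [← sin_pi_sub, ← hθ]
    ring_nf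
  refine mul_right_cancel₀ hs ?_
  rw [p_mul_sin, hreflect, sin_two_mul]
  ring

end

theorem stmt_15 (n i : ℕ) (hi : i ≤ n) :
    p n (4 * Real.cos (Real.pi / ((n : ℝ) + 4)) ^ 2) *
      p i (4 * Real.cos (Real.pi / ((n : ℝ) + 4)) ^ 2) =
    (4 * Real.cos (Real.pi / ((n : ℝ) + 4)) ^ 2) ^ (i + 1) *
      p (n - i) (4 * Real.cos (Real.pi / ((n : ℝ) + 4)) ^ 2) := by
  set θ := π / ((n : ℝ) + 4)
  have hθ : ((n : ℝ) + 4) * θ = π := mul_div_cancel₀ π (by positivity)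
  have hs : sin θ ≠ 0 :=
    (sin_pos_of_pos_of_lt_pi (by positivity) (div_lt_self pi_pos (by linarith))).ne'
  calc p n (4 * cos θ ^ 2) * p i (4 * cos θ ^ 2)
      = (2 * cos θ) ^ (i + 1) * ((2 * cos θ) ^ (n - i + 1) * p i (4 * cos θ ^ 2)) := by
        rw [p_eq_pow hθ hs, ← mul_assoc, ← pow_add]
        congr 2
        omega
    _ = (4 * cos θ ^ 2) ^ (i + 1) * p (n - i) (4 * cos θ ^ 2) := by
        rw [pow_mul_p_eq_pow_mul_p_sub hθ hs hi, ← mul_assoc, ← mul_pow]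
        ring_nf
end

section
/- If ρ ≥ 1 and n ≥ 0 are such that there exists a real a_0 > α_n with p_n(a_0) = ρ, then a_0 is unique; that is, p_n takes the value ρ at exactly one point in the interval (α_n, ∞), where α_n = 4cos²(π/(n+2)). -/
open Real Finset

/-! Substituting `x = 4c²` turns the recurrence for `p` into the Chebyshev recurrence:
`p n (4c²) = (2c)^(n+1) U_{n+1}(c)`. The roots of `U_{n+1}` are the `cos (kπ/(n+2))`, the largest
being `cos (π/(n+2)) = √α_n / 2`, so beyond it `U_{n+1}` is a product of positive increasing linear
factors. Hence `p n` is strictly increasing on `(α_n, ∞)` and takes every value there at most once. -/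

open Polynomial Polynomial.Chebyshev

lemma p_four_mul_sq : ∀ (n : ℕ) (c : ℝ),
    p n (4 * c ^ 2) = (2 * c) ^ (n + 1) * (U ℝ ↑(n + 1)).eval c
  | 0, c => by simp only [p, zero_add, Nat.cast_one, U_one, eval_mul, eval_X, eval_ofNat]; ring
  | 1, c => by
      simp only [p, Nat.reduceAdd, Nat.cast_ofNat, U_two, eval_sub, eval_mul, eval_pow, eval_X,
        eval_ofNat, eval_one]
      ring
  | n + 2, c => by
      have hU : U ℝ ↑(n + 2 + 1) = 2 * X * U ℝ ↑(n + 1 + 1) - U ℝ ↑(n + 1) := by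
        push_cast; exact U_add_two ℝ ((n : ℤ) + 1)
      rw [p, p_four_mul_sq (n + 1), p_four_mul_sq n, hU]
      simp only [eval_sub, eval_mul, eval_X, eval_ofNat]
      ring

lemma eval_U_real_eq_prod (m : ℕ) (x : ℝ) :
    (U ℝ m).eval x = 2 ^ m * ∏ k ∈ range m, (x - cos ((k + 1) * π / (m + 1))) := by
  have hinj := (range m).nodup_map_iff_injOn.mp (roots_U_real_nodup m)
  have hcard : Multiset.card (U ℝ m).roots = (U ℝ m).natDegree := by
    rw [roots_U_real, natDegree_U_natCast, Finset.card_val, card_image_of_injOn hinj, card_range]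
  conv_lhs => rw [← C_leadingCoeff_mul_prod_multiset_X_sub_C hcard]
  rw [leadingCoeff_U_natCast, roots_U_real, eval_mul, eval_C, eval_multiset_prod, Multiset.map_map,
    Finset.prod_map_val, prod_image hinj]
  simp

lemma cos_succ_mul_pi_div_le_cos_pi_div (m : ℕ) {k : ℕ} (hk : k ≤ m) :
    cos ((k + 1) * π / (m + 1)) ≤ cos (π / (m + 1)) := by
  have hm : (0 : ℝ) < m + 1 := by positivity
  have hkm : (k : ℝ) + 1 ≤ m + 1 := by norm_cast; omega
  apply cos_le_cos_of_nonneg_of_le_pi (by positivity)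
  · rw [div_le_iff₀ hm]; nlinarith [pi_pos]
  · gcongr; exact le_mul_of_one_le_left pi_pos.le (le_add_of_nonneg_left k.cast_nonneg)

lemma eval_U_real_pos (m : ℕ) {x : ℝ} (hx : cos (π / (m + 1)) < x) : 0 < (U ℝ m).eval x := by
  rw [eval_U_real_eq_prod]
  exact mul_pos (by positivity) <| prod_pos fun k hk ↦
    sub_pos.mpr ((cos_succ_mul_pi_div_le_cos_pi_div m (mem_range.mp hk).le).trans_lt hx)

lemma strictMonoOn_eval_U_real {m : ℕ} (hm : m ≠ 0) :
    StrictMonoOn (U ℝ m).eval (Set.Ioi (cos (π / (m + 1)))) := by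
  intro x hx y _ hxy
  simp only [eval_U_real_eq_prod]
  refine mul_lt_mul_of_pos_left (prod_lt_prod_of_nonempty (fun k hk ↦ ?_) (fun k _ ↦ ?_)
    (nonempty_range_iff.mpr hm)) (by positivity)
  · exact sub_pos.mpr ((cos_succ_mul_pi_div_le_cos_pi_div m (mem_range.mp hk).le).trans_lt hx)
  · exact sub_lt_sub_right hxy _

lemma p_eq_sqrt_pow_mul_eval_U (n : ℕ) {a : ℝ} (ha : 0 ≤ a) :
    p n a = √a ^ (n + 1) * (U ℝ ↑(n + 1)).eval (√a / 2) := by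
  have h4 : 4 * (√a / 2) ^ 2 = a := by rw [div_pow, sq_sqrt ha]; ring
  conv_lhs => rw [← h4, p_four_mul_sq, mul_div_cancel₀ √a two_ne_zero]

lemma strictMonoOn_p (n : ℕ) : StrictMonoOn (p n) (Set.Ioi (4 * cos (π / (n + 2)) ^ 2)) := by
  have hidx : ((n + 1 : ℕ) : ℝ) + 1 = n + 2 := by push_cast; ring
  have hroot : ∀ a, 4 * cos (π / (n + 2)) ^ 2 < a → cos (π / (↑(n + 1) + 1)) < √a / 2 := by
    intro a ha
    rw [hidx, lt_div_iff₀ two_pos, mul_comm]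
    exact lt_sqrt_of_sq_lt (by linarith)
  intro a ha b hb hab
  have ha0 : 0 ≤ a := (by positivity : 0 ≤ 4 * cos (π / (n + 2)) ^ 2).trans (le_of_lt ha)
  rw [p_eq_sqrt_pow_mul_eval_U n ha0, p_eq_sqrt_pow_mul_eval_U n (ha0.trans hab.le)]
  exact mul_lt_mul'' (pow_lt_pow_left₀ (sqrt_lt_sqrt ha0 hab) (sqrt_nonneg a) n.succ_ne_zero)
    (strictMonoOn_eval_U_real n.succ_ne_zero (hroot a ha) (hroot b hb) (by gcongr))
    (by positivity) (eval_U_real_pos _ (hroot a ha)).le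

theorem stmt_16_general (n : ℕ) (ρ : ℝ)
    (h : ∃ a : ℝ, a > 4 * Real.cos (Real.pi / ((n : ℝ) + 2)) ^ 2 ∧ p n a = ρ) :
    ∃! a : ℝ, a > 4 * Real.cos (Real.pi / ((n : ℝ) + 2)) ^ 2 ∧ p n a = ρ := by
  obtain ⟨a, ha, hpa⟩ := h
  exact ⟨a, ⟨ha, hpa⟩, fun b ⟨hb, hpb⟩ ↦ (strictMonoOn_p n).injOn hb ha (hpb.trans hpa.symm)⟩

theorem stmt_16 (n : ℕ) (ρ : ℝ) (hρ : 1 ≤ ρ)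
    (h : ∃ a : ℝ, a > 4 * Real.cos (Real.pi / ((n : ℝ) + 2)) ^ 2 ∧ p n a = ρ) :
    ∃! a : ℝ, a > 4 * Real.cos (Real.pi / ((n : ℝ) + 2)) ^ 2 ∧ p n a = ρ :=
  stmt_16_general n ρ h
end

section
/- For m ≥ 2 an integer, the function g(n) = 2(1 − π²/(2(n+3)²))^{n+1} satisfies g(n) ≥ 1 for all integers n ≥ 2. -/
/-!
Bernoulli's inequality gives `(1 - x) ^ (n + 1) ≥ 1 - (n + 1) x ≥ 1 / 2` as soon as
`(n + 1) π² ≤ (n + 3)²`, which holds for `n ≥ 5` since `π² < 3.15² < 10`. The cases `n = 2, 3, 4` are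
checked numerically after replacing `π` by the rational upper bound `3.15`.
-/

open Real

lemma half_le_one_sub_pow {x : ℝ} {k : ℕ} (hx : x ≤ 2) (hkx : k * x ≤ 1 / 2) :
    1 / 2 ≤ (1 - x) ^ k := by
  have bernoulli := one_add_mul_le_pow (a := -x) (by linarith) k
  rw [mul_neg, ← sub_eq_add_neg, ← sub_eq_add_neg] at bernoulli
  linarith

lemma one_le_two_mul_one_sub_pow (n : ℕ) (hn : 2 ≤ n) :
    1 ≤ 2 * (1 - 3.15 ^ 2 / (2 * ((n : ℝ) + 3) ^ 2)) ^ (n + 1) := by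
  rcases lt_or_ge n 5 with hsmall | hlarge
  · interval_cases n <;> norm_num
  · have hn5 : (5 : ℝ) ≤ n := by exact_mod_cast hlarge
    have hmul : ((n + 1 : ℕ) : ℝ) * (3.15 ^ 2 / (2 * ((n : ℝ) + 3) ^ 2)) ≤ 1 / 2 := by
      rw [mul_div_assoc', div_le_div_iff₀ (by positivity) two_pos]
      push_cast
      nlinarith
    have hx : 3.15 ^ 2 / (2 * ((n : ℝ) + 3) ^ 2) ≤ 2 := by
      rw [div_le_iff₀ (by positivity)]
      nlinarith
    linarith [half_le_one_sub_pow hx hmul]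

theorem stmt_19 (n : ℕ) (hn : 2 ≤ n) :
    2 * (1 - Real.pi ^ 2 / (2 * ((n : ℝ) + 3) ^ 2)) ^ (n + 1) ≥ 1 := by
  have hbase : 0 ≤ 1 - 3.15 ^ 2 / (2 * ((n : ℝ) + 3) ^ 2) := by
    rw [sub_nonneg, div_le_one (by positivity)]
    nlinarith [(Nat.cast_nonneg n : (0 : ℝ) ≤ n)]
  calc 1 ≤ 2 * (1 - 3.15 ^ 2 / (2 * ((n : ℝ) + 3) ^ 2)) ^ (n + 1) :=
        one_le_two_mul_one_sub_pow n hn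
    _ ≤ 2 * (1 - π ^ 2 / (2 * ((n : ℝ) + 3) ^ 2)) ^ (n + 1) := by
        gcongr
        exact pi_lt_d2.le
end
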